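/- arXiv:2002.09980 — 3 statements merged into one kernel-verified Lean document; each statement's English description precedes it below -/
import Mathlib

section
/- Fix an integer n ≥ 1. Let ψ : ℝ → ℝ be (n−1)-times continuously differentiable such that for every θ ∈ ℤ the restriction of ψ to [θ/2, (θ+1)/2] coincides with a polynomial of degree at most n, with leading coefficient A_θ. Let η : ℝ → ℝ be integrable, vanishing outside (−2^{−5}, 2^{−5}), with ∫_ℝ y^M η(y) dy = 0 for every integer 0 ≤ M ≤ n+2. Then for every real number a ≥ 1 and every λ ∈ ℤ: ∫_ℝ η(a(y − λ/2)) ψ(y) dy = a^{−(n+1)} ( A_{λ−1} ∫_{−1/2}^{0} u^n η(u) du + A_λ ∫_{0}^{1/2} u^n η(u) du ). -/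
open MeasureTheory Set Polynomial

/-! Put `t = λ/2` and let `P₁`, `P₂` be the polynomials of degree `≤ n` that agree with `ψ` on
`[t - 1/2, t]` and `[t, t + 1/2]`. As `ψ` is `C^(n-1)`, `P₂ - P₁` vanishes to order `n` at `t`,
so it is `(A_λ - A_{λ-1}) (X - t)^n` and, for `|x| ≤ 1/2`,
`ψ (t + x) = P₁ (t + x) + (A_λ - A_{λ-1}) x^n 𝟙(x > 0)`.
Substituting `u = a (y - t)` keeps `t + u/a` in that range on the support of `η`; the polynomial
`P₁ (t + u/a)` is annihilated by the vanishing moments of `η`, leaving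
`a^(-(n+1)) (A_λ - A_{λ-1}) ∫₀^{1/2} u^n η u`, and the vanishing `n`-th moment splits this into the
two one-sided integrals. -/

theorem Polynomial.iteratedDeriv_eval (p : ℝ[X]) (k : ℕ) :
    iteratedDeriv k (fun x => p.eval x) = fun x => (derivative^[k] p).eval x := by
  induction k with
  | zero => simp
  | succ k ih =>
    ext x
    rw [iteratedDeriv_succ, ih, Function.iterate_succ_apply', Polynomial.deriv]

theorem ContDiff.iteratedDeriv_eqOn_of_eqOn_polynomial {m k : ℕ} {ψ : ℝ → ℝ} {p : ℝ[X]}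
    {s r : ℝ} (hψ : ContDiff ℝ m ψ) (hk : k ≤ m) (hsr : s < r)
    (h : EqOn ψ (fun x => p.eval x) (Icc s r)) :
    EqOn (iteratedDeriv k ψ) (fun x => (derivative^[k] p).eval x) (Icc s r) := by
  have hIoo := (h.mono Ioo_subset_Icc_self).iteratedDeriv_of_isOpen isOpen_Ioo k
  rw [p.iteratedDeriv_eval] at hIoo
  simpa [closure_Ioo hsr.ne] using
    hIoo.closure (hψ.continuous_iteratedDeriv k (mod_cast hk)) (Polynomial.continuous _)

theorem Polynomial.eq_C_mul_X_sub_C_pow_of_iterate_derivative_eval_eq_zero {Q : ℝ[X]} {t : ℝ}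
    {n : ℕ} (hdeg : Q.natDegree ≤ n) (hder : ∀ k < n, (derivative^[k] Q).eval t = 0) :
    Q = C (Q.coeff n) * (X - C t) ^ n := by
  rcases eq_or_ne Q 0 with rfl | hQ
  · simp
  have hmult : n ≤ Q.rootMultiplicity t := by
    rcases n with _ | n
    · exact Nat.zero_le _
    · exact lt_rootMultiplicity_of_isRoot_iterate_derivative hQ fun k hk => hder k (by omega)
  obtain ⟨g, rfl⟩ := (le_rootMultiplicity_iff hQ).1 hmult
  have hg : g ≠ 0 := right_ne_zero_of_mul hQ
  have hmonic : ((X - C t) ^ n).Monic := (monic_X_sub_C t).pow n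
  have hdn : ((X - C t) ^ n).natDegree = n := by simp
  rw [hmonic.natDegree_mul' hg, hdn] at hdeg
  rw [eq_C_of_natDegree_eq_zero (by omega : g.natDegree = 0), coeff_mul_C]
  have hlead : ((X - C t) ^ n).coeff n = 1 := by simpa [hdn] using hmonic.coeff_natDegree
  rw [hlead, one_mul, mul_comm]

theorem Polynomial.exists_eqOn_sum_range {ψ : ℝ → ℝ} {s : Set ℝ} {n : ℕ} {c : ℕ → ℝ}
    (h : ∀ x ∈ s, ψ x = ∑ j ∈ Finset.range (n + 1), c j * x ^ j) :
    ∃ P : ℝ[X], P.natDegree ≤ n ∧ P.coeff n = c n ∧ EqOn ψ (fun x => P.eval x) s := by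
  refine ⟨∑ j ∈ Finset.range (n + 1), C (c j) * X ^ j, ?_, ?_, fun x hx => ?_⟩
  · exact natDegree_sum_le_of_forall_le _ _ fun j hj =>
      (natDegree_C_mul_X_pow_le _ _).trans (Nat.lt_succ_iff.1 (Finset.mem_range.1 hj))
  · simp [coeff_C_mul, coeff_X_pow]
  · simp [h x hx, eval_finsetSum]

theorem eq_eval_add_mul_indicator_of_eqOn_Icc {ψ : ℝ → ℝ} {P₁ P₂ : ℝ[X]} {t h : ℝ} {n : ℕ}
    (hψ : ContDiff ℝ (n - 1 : ℕ) ψ) (hh : 0 < h) (hP₁ : P₁.natDegree ≤ n) (hP₂ : P₂.natDegree ≤ n)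
    (h₁ : EqOn ψ (fun x => P₁.eval x) (Icc (t - h) t))
    (h₂ : EqOn ψ (fun x => P₂.eval x) (Icc t (t + h))) {x : ℝ} (hx : x ∈ Icc (-h) h) :
    ψ (t + x) = P₁.eval (t + x) + (P₂.coeff n - P₁.coeff n) * (Ioi 0).indicator (· ^ n) x := by
  have hjump : P₂ - P₁ = C ((P₂ - P₁).coeff n) * (X - C t) ^ n := by
    refine eq_C_mul_X_sub_C_pow_of_iterate_derivative_eval_eq_zero
      ((natDegree_sub_le _ _).trans (max_le hP₂ hP₁)) fun k hk => ?_
    have e₁ := hψ.iteratedDeriv_eqOn_of_eqOn_polynomial (k := k) (by omega) (by linarith) h₁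
      ⟨by linarith, le_rfl⟩
    have e₂ := hψ.iteratedDeriv_eqOn_of_eqOn_polynomial (k := k) (by omega) (by linarith) h₂
      ⟨le_rfl, by linarith⟩
    rw [iterate_derivative_sub, eval_sub]
    exact sub_eq_zero.2 (e₂.symm.trans e₁)
  rcases le_or_gt x 0 with hx0 | hx0
  · rw [indicator_of_notMem (show x ∉ Ioi 0 from not_lt.2 hx0), mul_zero, add_zero]
    exact h₁ ⟨by linarith [hx.1], by linarith⟩
  · have := congrArg (eval (t + x)) hjump
    simp only [eval_sub, eval_mul, eval_C, eval_pow, eval_X, coeff_sub, add_sub_cancel_left] at this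
    rw [indicator_of_mem (show x ∈ Ioi 0 from hx0), h₂ ⟨by linarith, by linarith [hx.2]⟩]
    linarith

theorem indicator_Ioi_pow_mul {c : ℝ} (hc : 0 < c) (n : ℕ) (u : ℝ) :
    (Ioi 0).indicator (· ^ n) (c * u) = c ^ n * (Ioi 0).indicator (· ^ n) u := by
  by_cases hu : 0 < u
  · have hcu : 0 < c * u := mul_pos hc hu
    simp only [indicator, mem_Ioi, hu, hcu, if_true, mul_pow]
  · have hcu : ¬0 < c * u := fun h => hu (pos_of_mul_pos_right h hc.le)
    simp only [indicator, mem_Ioi, hu, hcu, if_false, mul_zero]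

theorem apply_add_mul_eq_of_eq_add_indicator {ψ : ℝ → ℝ} {P : ℝ[X]} {t h d c : ℝ} {n : ℕ}
    (hψ : ∀ x ∈ Icc (-h) h, ψ (t + x) = P.eval (t + x) + d * (Ioi 0).indicator (· ^ n) x)
    (hc₀ : 0 < c) (hc₁ : c ≤ 1) {u : ℝ} (hu : u ∈ Icc (-h) h) :
    ψ (t + c * u) = (P.comp (C c * X + C t)).eval u + d * c ^ n * (Ioi 0).indicator (· ^ n) u := by
  have hcu : |c * u| ≤ h := by
    rw [abs_mul, abs_of_pos hc₀]
    exact (mul_le_of_le_one_left (abs_nonneg u) hc₁).trans (abs_le.2 hu)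
  rw [hψ _ (abs_le.1 hcu), indicator_Ioi_pow_mul hc₀, eval_comp]
  simp only [eval_add, eval_mul, eval_C, eval_X, add_comm (c * u) t]
  ring

theorem MeasureTheory.Integrable.continuous_mul_of_support_subset {X R : Type*}
    [MeasurableSpace X] [TopologicalSpace X] [OpensMeasurableSpace X] [T2Space X]
    [NormedRing R] [SecondCountableTopologyEither X R] {μ : Measure X} {η φ : X → R} {K : Set X}
    (hη : Integrable η μ) (hK : IsCompact K) (hsupp : Function.support η ⊆ K)
    (hφ : Continuous φ) : Integrable (fun x => φ x * η x) μ := by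
  refine (integrableOn_iff_integrable_of_support_subset ?_).1
    (hη.integrableOn.continuousOn_mul hφ.continuousOn hK)
  exact (Function.support_mul_subset_right _ _).trans hsupp

theorem integral_polynomial_eval_mul_eq_zero {μ : Measure ℝ} {η : ℝ → ℝ} {N : ℕ}
    (hint : ∀ j, Integrable (fun u => u ^ j * η u) μ) (hmom : ∀ M ≤ N, ∫ u, u ^ M * η u ∂μ = 0)
    {p : ℝ[X]} (hp : p.natDegree ≤ N) : ∫ u, p.eval u * η u ∂μ = 0 := by
  have hsum : (fun u => p.eval u * η u) =
      fun u => ∑ j ∈ Finset.range (N + 1), p.coeff j * (u ^ j * η u) := by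
    ext u
    rw [eval_eq_sum_range' (Nat.lt_succ_of_le hp), Finset.sum_mul]
    exact Finset.sum_congr rfl fun j _ => mul_assoc _ _ _
  rw [hsum, integral_finsetSum _ fun j _ => (hint j).const_mul _]
  refine Finset.sum_eq_zero fun j hj => ?_
  rw [integral_const_mul, hmom j (Nat.lt_succ_iff.1 (Finset.mem_range.1 hj)), mul_zero]

theorem integral_comp_mul_sub_eq (f : ℝ → ℝ) {a : ℝ} (ha : 0 < a) (t : ℝ) :
    ∫ y, f (a * (y - t)) = a⁻¹ * ∫ u, f u := by
  rw [integral_sub_right_eq_self (fun z => f (a * z)) t, Measure.integral_comp_mul_left,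
    abs_of_pos (inv_pos.2 ha), smul_eq_mul]

theorem integral_comp_mul_sub_mul_of_eq_add_indicator {ψ η : ℝ → ℝ} {P : ℝ[X]} {t h d : ℝ}
    {n : ℕ} (hη : Integrable η) (hsupp : Function.support η ⊆ Ioo (-h) h)
    (hmom : ∀ M ≤ n, ∫ u, u ^ M * η u = 0) (hP : P.natDegree ≤ n)
    (hψ : ∀ x ∈ Icc (-h) h, ψ (t + x) = P.eval (t + x) + d * (Ioi 0).indicator (· ^ n) x)
    {a : ℝ} (ha : 1 ≤ a) :
    ∫ y, η (a * (y - t)) * ψ y = a⁻¹ ^ (n + 1) * d * ∫ u in Ioi 0, u ^ n * η u := by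
  have ha₀ : 0 < a := by linarith
  have hint : ∀ φ : ℝ → ℝ, Continuous φ → Integrable (fun u => φ u * η u) := fun φ hφ =>
    hη.continuous_mul_of_support_subset isCompact_Icc (hsupp.trans Ioo_subset_Icc_self) hφ
  set R := P.comp (C a⁻¹ * X + C t)
  have hR : R.natDegree ≤ n := by
    simpa using natDegree_comp_le.trans (Nat.mul_le_mul hP natDegree_linear_le)
  have hpt : ∀ u, η u * ψ (t + a⁻¹ * u)
      = R.eval u * η u + d * a⁻¹ ^ n * (Ioi 0).indicator (fun u => u ^ n * η u) u := by
    intro u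
    by_cases hu : η u = 0
    · simp [hu]
    rw [apply_add_mul_eq_of_eq_add_indicator hψ (inv_pos.2 ha₀) (inv_le_one_of_one_le₀ ha)
      (Ioo_subset_Icc_self (hsupp hu)), indicator_mul_left]
    ring
  calc ∫ y, η (a * (y - t)) * ψ y = a⁻¹ * ∫ u, η u * ψ (t + a⁻¹ * u) := by
        rw [← integral_comp_mul_sub_eq (fun u => η u * ψ (t + a⁻¹ * u)) ha₀ t]
        simp only [inv_mul_cancel_left₀ ha₀.ne', add_sub_cancel]
    _ = a⁻¹ ^ (n + 1) * d * ∫ u in Ioi 0, u ^ n * η u := by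
        simp_rw [hpt]
        rw [integral_add (hint _ R.continuous)
            (((hint _ (continuous_pow n)).indicator measurableSet_Ioi).const_mul _),
          integral_polynomial_eval_mul_eq_zero (fun j => hint _ (continuous_pow j)) hmom hR,
          integral_const_mul, integral_indicator measurableSet_Ioi]
        ring

theorem setIntegral_Ioi_eq_intervalIntegral {f : ℝ → ℝ} {h : ℝ} (hh : 0 ≤ h)
    (hsupp : Function.support f ⊆ Ioo (-h) h) : ∫ u in Ioi 0, f u = ∫ u in 0..h, f u := by
  rw [intervalIntegral.integral_of_le hh]
  refine setIntegral_eq_of_subset_of_forall_sdiff_eq_zero measurableSet_Ioi Ioc_subset_Ioi_self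
    fun x hx => Function.notMem_support.1 fun hfx => hx.2 ⟨hx.1, (hsupp hfx).2.le⟩

theorem intervalIntegral_neg_eq_neg_of_integral_eq_zero {f : ℝ → ℝ} {h : ℝ} (hf : Integrable f)
    (hsupp : Function.support f ⊆ Ioo (-h) h) (h0 : ∫ u, f u = 0) :
    ∫ u in -h..0, f u = -∫ u in 0..h, f u := by
  rcases le_or_gt 0 h with hh | hh
  · have hfull : ∫ u in -h..h, f u = ∫ u, f u := by
      rw [intervalIntegral.integral_of_le (by linarith)]
      exact setIntegral_eq_integral_of_forall_compl_eq_zero fun x hx =>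
        Function.notMem_support.1 fun hfx => hx (Ioo_subset_Ioc_self (hsupp hfx))
    rw [← intervalIntegral.integral_add_adjacent_intervals (b := 0) hf.intervalIntegrable
      hf.intervalIntegrable, h0] at hfull
    linarith
  · obtain rfl : f = 0 := Function.support_eq_empty_iff.1
      (subset_empty_iff.1 (hsupp.trans (Ioo_eq_empty (by linarith)).le))
    simp

theorem stmt_13_general
    (n : ℕ) (ψ : ℝ → ℝ)
    (hsmooth : ContDiff ℝ (n - 1 : ℕ) ψ)
    (A : ℤ → ℝ)
    (hpoly : ∀ θ : ℤ, ∃ c : ℕ → ℝ, c n = A θ ∧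
      ∀ x ∈ Set.Icc ((θ : ℝ) / 2) (((θ : ℝ) + 1) / 2),
        ψ x = ∑ j ∈ Finset.range (n + 1), c j * x ^ j)
    (η : ℝ → ℝ) (hη : MeasureTheory.Integrable η)
    (hηsupp : ∀ y : ℝ, y ∉ Set.Ioo (-(2 : ℝ) ^ (-5 : ℤ)) ((2 : ℝ) ^ (-5 : ℤ)) → η y = 0)
    (hηmom : ∀ M : ℕ, M ≤ n + 2 → ∫ y : ℝ, y ^ M * η y = 0) :
    ∀ a : ℝ, 1 ≤ a → ∀ lam : ℤ,
      ∫ y : ℝ, η (a * (y - (lam : ℝ) / 2)) * ψ y =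
        a ^ (-((n : ℤ) + 1)) *
          (A (lam - 1) * (∫ u in (-(1 / 2) : ℝ)..0, u ^ n * η u) +
           A lam * ∫ u in (0 : ℝ)..(1 / 2), u ^ n * η u) := by
  intro a ha lam
  have hsupp : Function.support η ⊆ Ioo (-(1 / 2)) (1 / 2) := Function.support_subset_iff'.2
    fun y hy => hηsupp y fun hy' => hy (Ioo_subset_Ioo (by norm_num) (by norm_num) hy')
  have hsuppₙ : Function.support (fun u => u ^ n * η u) ⊆ Ioo (-(1 / 2)) (1 / 2) :=
    (Function.support_mul_subset_right _ _).trans hsupp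
  obtain ⟨c₁, hc₁n, hc₁⟩ := hpoly (lam - 1)
  obtain ⟨c₂, hc₂n, hc₂⟩ := hpoly lam
  obtain ⟨P₁, hdeg₁, hcoeff₁, hψ₁⟩ := Polynomial.exists_eqOn_sum_range hc₁
  obtain ⟨P₂, hdeg₂, hcoeff₂, hψ₂⟩ := Polynomial.exists_eqOn_sum_range hc₂
  simp only [Int.cast_sub, Int.cast_one, sub_add_cancel] at hψ₁
  rw [show ((lam : ℝ) - 1) / 2 = lam / 2 - 1 / 2 by ring] at hψ₁
  rw [show ((lam : ℝ) + 1) / 2 = lam / 2 + 1 / 2 by ring] at hψ₂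
  have hjump := fun x (hx : x ∈ Icc (-(1 / 2)) (1 / 2)) =>
    eq_eval_add_mul_indicator_of_eqOn_Icc hsmooth (by norm_num) hdeg₁ hdeg₂ hψ₁ hψ₂ hx
  rw [integral_comp_mul_sub_mul_of_eq_add_indicator hη hsupp (fun M hM => hηmom M (by omega))
      hdeg₁ hjump ha, setIntegral_Ioi_eq_intervalIntegral (by norm_num) hsuppₙ,
    intervalIntegral_neg_eq_neg_of_integral_eq_zero
      (hη.continuous_mul_of_support_subset isCompact_Icc (hsupp.trans Ioo_subset_Icc_self)
        (continuous_pow n)) hsuppₙ (hηmom n (by omega)),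
    hcoeff₁, hcoeff₂, hc₁n, hc₂n, zpow_neg, ← Nat.cast_add_one, zpow_natCast, inv_pow]
  ring

theorem stmt_13
    (n : ℕ) (hn : 1 ≤ n) (ψ : ℝ → ℝ)
    (hsmooth : ContDiff ℝ (n - 1 : ℕ) ψ)
    (A : ℤ → ℝ)
    (hpoly : ∀ θ : ℤ, ∃ c : ℕ → ℝ, c n = A θ ∧
      ∀ x ∈ Set.Icc ((θ : ℝ) / 2) (((θ : ℝ) + 1) / 2),
        ψ x = ∑ j ∈ Finset.range (n + 1), c j * x ^ j)
    (η : ℝ → ℝ) (hη : MeasureTheory.Integrable η)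
    (hηsupp : ∀ y : ℝ, y ∉ Set.Ioo (-(2 : ℝ) ^ (-5 : ℤ)) ((2 : ℝ) ^ (-5 : ℤ)) → η y = 0)
    (hηmom : ∀ M : ℕ, M ≤ n + 2 → ∫ y : ℝ, y ^ M * η y = 0) :
    ∀ a : ℝ, 1 ≤ a → ∀ lam : ℤ,
      ∫ y : ℝ, η (a * (y - (lam : ℝ) / 2)) * ψ y =
        a ^ (-((n : ℤ) + 1)) *
          (A (lam - 1) * (∫ u in (-(1 / 2) : ℝ)..0, u ^ n * η u) +
           A lam * ∫ u in (0 : ℝ)..(1 / 2), u ^ n * η u) :=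
  stmt_13_general n ψ hsmooth A hpoly η hη hηsupp hηmom
end

section
/- Fix an integer n ≥ 1. Let ψ : ℝ → ℝ be (n−1)-times continuously differentiable such that for every θ ∈ ℤ the restriction of ψ to [θ/2, (θ+1)/2] coincides with a polynomial of degree at most n, with leading coefficient A_θ; assume A_0 ≠ 0. Let η : ℝ → ℝ be integrable, vanishing outside (−2^{−5}, 2^{−5}), with ∫_ℝ y^M η(y) dy = 0 for 0 ≤ M ≤ n+2 and ∫_0^{1/2} u^n η(u) du > 0. Assume that either (y ↦ y^n η(y) is odd and A_{−1} · A_0 ≤ 0) or (y ↦ y^n η(y) is even and A_{−1} · A_0 ≥ 0). Then for every real number a ≥ 1: |∫_ℝ η(a y) ψ(y) dy| ≥ |A_0| · a^{−(n+1)} · ∫_0^{1/2} u^n η(u) du. -/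
/-! On `[-1/2, 1/2]` the `C^(n-1)` gluing at `0` forces the two polynomial pieces of `ψ` to share
all coefficients below degree `n`, so there `ψ y = P y + (A (-1) - A 0) * y ^ n * 1[y < 0]` with
`deg P ≤ n`. The support of `η (a * ·)` lies in `[-1/2, 1/2]`; after substituting `u = a * y` the
vanishing moments kill `P`, and since `∫_{u<0} u^n η = -∫_{u>0} u^n η` the integral equals
`-(A (-1) - A 0) * a ^ (-(n+1)) * ∫_0^{1/2} u^n η`. If `A (-1) * A 0 ≤ 0` then
`|A 0| ≤ |A (-1) - A 0|`; the even alternative cannot occur, because evenness of `u^n η` together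
with its vanishing integral forces `∫_0^{1/2} u^n η = 0`. -/

open MeasureTheory Set
open Finset (range mem_range sum_range_succ)

open Polynomial in
theorem Polynomial.coeff_sum_range_C_mul_X_pow {R : Type*} [Semiring R] (c : ℕ → R) {n j : ℕ}
    (hj : j ≤ n) : (∑ i ∈ range (n + 1), C (c i) * X ^ i).coeff j = c j := by
  simp only [finsetSum_coeff, coeff_C_mul_X_pow]
  rw [Finset.sum_ite_eq, if_pos (mem_range.mpr (Nat.lt_succ_of_le hj))]

theorem eqOn_deriv_of_eqOn_Icc {f g : ℝ → ℝ} {a b : ℝ} (hab : a < b) (hfg : EqOn f g (Icc a b))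
    (hf : Continuous (deriv f)) (hg : Continuous (deriv g)) :
    EqOn (deriv f) (deriv g) (Icc a b) := by
  have hIoo := (hfg.mono Ioo_subset_Icc_self).deriv isOpen_Ioo
  simpa [closure_Ioo hab.ne] using hIoo.closure hf hg

open Polynomial in
theorem coeff_eq_of_contDiff_of_eqOn_Icc {f : ℝ → ℝ} {P R : ℝ[X]} {a b : ℝ}
    (ha : a < 0) (hb : 0 < b) (hP : EqOn f (fun x => P.eval x) (Icc a 0))
    (hR : EqOn f (fun x => R.eval x) (Icc 0 b)) {k j : ℕ} (hf : ContDiff ℝ k f) (hj : j ≤ k) :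
    P.coeff j = R.coeff j := by
  induction j generalizing f P R k with
  | zero =>
    simpa only [coeff_zero_eq_eval_zero] using
      (hP ⟨ha.le, le_rfl⟩).symm.trans (hR ⟨le_rfl, hb.le⟩)
  | succ i ih =>
    obtain ⟨k, rfl⟩ : ∃ k', k = k' + 1 := ⟨k - 1, by omega⟩
    have hf' : ContDiff ℝ k (deriv f) :=
      (contDiff_succ_iff_deriv.mp (by exact_mod_cast hf)).2.2
    have hderiv (Q : ℝ[X]) : deriv (fun x => Q.eval x) = fun x => Q.derivative.eval x :=
      funext fun _ => Q.deriv
    have h := ih (P := P.derivative) (R := R.derivative)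
      (by simpa only [hderiv] using eqOn_deriv_of_eqOn_Icc ha hP hf'.continuous
            (by rw [hderiv]; exact P.derivative.continuous))
      (by simpa only [hderiv] using eqOn_deriv_of_eqOn_Icc hb hR hf'.continuous
            (by rw [hderiv]; exact R.derivative.continuous))
      hf' (by omega)
    simp only [coeff_derivative] at h
    exact mul_right_cancel₀ (by positivity) h

theorem eqOn_add_pow_indicator_of_contDiff {n : ℕ} {ψ : ℝ → ℝ} (hψ : ContDiff ℝ (n - 1 : ℕ) ψ)
    {a b : ℝ} (ha : a < 0) (hb : 0 < b) {c₀ c₁ : ℕ → ℝ}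
    (h₀ : ∀ x ∈ Icc 0 b, ψ x = ∑ j ∈ range (n + 1), c₀ j * x ^ j)
    (h₁ : ∀ x ∈ Icc a 0, ψ x = ∑ j ∈ range (n + 1), c₁ j * x ^ j) (x : ℝ) (hx : x ∈ Icc a b) :
    ψ x = ∑ j ∈ range (n + 1), c₀ j * x ^ j + (c₁ n - c₀ n) * (Iio 0).indicator (· ^ n) x := by
  have hpoly (c : ℕ → ℝ) (y : ℝ) :
      (∑ j ∈ range (n + 1), Polynomial.C (c j) * Polynomial.X ^ j).eval y =
        ∑ j ∈ range (n + 1), c j * y ^ j := by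
    simp [Polynomial.eval_finsetSum]
  have hcoeff : ∀ j < n, c₁ j = c₀ j := fun j hj => by
    simpa only [Polynomial.coeff_sum_range_C_mul_X_pow _ (by omega : j ≤ n)] using
      coeff_eq_of_contDiff_of_eqOn_Icc ha hb (fun y hy => (h₁ y hy).trans (hpoly c₁ y).symm)
        (fun y hy => (h₀ y hy).trans (hpoly c₀ y).symm) hψ (by omega : j ≤ n - 1)
  rcases lt_or_ge x 0 with hx0 | hx0
  · rw [h₁ x ⟨hx.1, hx0.le⟩, indicator_of_mem (mem_Iio.mpr hx0), sum_range_succ, sum_range_succ,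
      Finset.sum_congr rfl fun j hj => by rw [hcoeff j (mem_range.mp hj)]]
    ring
  · rw [h₀ x ⟨hx0, hx.2⟩, indicator_of_notMem (notMem_Iio.mpr hx0), mul_zero, add_zero]

theorem MeasureTheory.Integrable.continuous_mul_of_forall_notMem_eq_zero {η g : ℝ → ℝ}
    (hη : Integrable η) {K : Set ℝ} (hK : IsCompact K) (hsupp : ∀ y ∉ K, η y = 0)
    (hg : Continuous g) : Integrable fun u => g u * η u :=
  (hη.integrableOn.continuousOn_mul hg.continuousOn hK).integrable_of_forall_notMem_eq_zero
    fun y hy => by rw [hsupp y hy, mul_zero]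

theorem integral_comp_mul_left_mul_eq_of_moments {η ψ : ℝ → ℝ} {n : ℕ} {a d : ℝ} {c : ℕ → ℝ}
    (ha : 0 < a) (hint : ∀ j, Integrable fun u => u ^ j * η u)
    (hmom : ∀ j ≤ n, ∫ u, u ^ j * η u = 0)
    (hψ : ∀ y, η (a * y) ≠ 0 →
      ψ y = ∑ j ∈ range (n + 1), c j * y ^ j + d * (Iio 0).indicator (· ^ n) y) :
    ∫ y, η (a * y) * ψ y = d * (a ^ (n + 1))⁻¹ * ∫ u in Iio 0, u ^ n * η u := by
  have hpt (u : ℝ) : η u * ψ (u / a) = ∑ j ∈ range (n + 1), c j * (a ^ j)⁻¹ * (u ^ j * η u) +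
      d * (a ^ n)⁻¹ * (Iio 0).indicator (fun u => u ^ n * η u) u := by
    by_cases hu : η u = 0
    · simp [hu]
    rw [hψ (u / a) (by rwa [mul_div_cancel₀ u ha.ne']), mul_add, Finset.mul_sum]
    have hneg : u / a < 0 ↔ u < 0 := by rw [div_lt_iff₀ ha, zero_mul]
    simp only [indicator_apply, mem_Iio, hneg]
    congr 1
    · exact Finset.sum_congr rfl fun j _ => by rw [div_pow]; field_simp
    · split_ifs
      · rw [div_pow]; field_simp
      · simp
  calc ∫ y, η (a * y) * ψ y = a⁻¹ * ∫ u, η u * ψ (u / a) := by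
        rw [← abs_of_pos (inv_pos.mpr ha), ← smul_eq_mul, ← Measure.integral_comp_mul_left]
        simp_rw [mul_div_cancel_left₀ _ ha.ne']
    _ = d * (a ^ (n + 1))⁻¹ * ∫ u in Iio 0, u ^ n * η u := by
        simp_rw [hpt]
        rw [integral_add (integrable_finsetSum _ fun j _ => (hint j).const_mul _)
            (((hint n).indicator measurableSet_Iio).const_mul _),
          integral_finsetSum _ fun j _ => (hint j).const_mul _,
          Finset.sum_eq_zero fun j hj => by
            rw [integral_const_mul, hmom j (Nat.lt_succ_iff.mp (mem_range.mp hj)), mul_zero],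
          zero_add, integral_const_mul, integral_indicator measurableSet_Iio, pow_succ]
        field_simp

theorem integral_Iio_eq_neg_integral_Ioi {f : ℝ → ℝ} (hf : Integrable f) (h : ∫ x, f x = 0)
    (b : ℝ) : ∫ x in Iio b, f x = -∫ x in Ioi b, f x := by
  have := intervalIntegral.integral_Iio_add_Ici hf.integrableOn hf.integrableOn (b := b)
  rw [integral_Ici_eq_integral_Ioi, h] at this
  linarith

theorem integral_Ioi_eq_zero_of_even {f : ℝ → ℝ} (hf : Integrable f) (h : ∫ x, f x = 0)
    (heven : ∀ x, f (-x) = f x) : ∫ x in Ioi 0, f x = 0 := by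
  have hsym : ∫ x in Iio 0, f x = ∫ x in Ioi 0, f x := by
    rw [← integral_Iic_eq_integral_Iio, ← neg_zero, ← integral_comp_neg_Ioi, neg_zero]
    simp only [heven]
  linarith [integral_Iio_eq_neg_integral_Ioi hf h 0]

theorem integral_Ioi_eq_intervalIntegral {f : ℝ → ℝ} {a b : ℝ} (hab : a ≤ b)
    (hf : ∀ x, b < x → f x = 0) : ∫ x in Ioi a, f x = ∫ x in a..b, f x := by
  rw [intervalIntegral.integral_of_le hab]
  exact setIntegral_eq_of_subset_of_forall_sdiff_eq_zero measurableSet_Ioi Ioc_subset_Ioi_self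
    fun x hx => hf x (not_le.mp fun h => hx.2 ⟨hx.1, h⟩)

theorem abs_le_abs_sub_of_mul_nonpos {α : Type*} [CommRing α] [LinearOrder α]
    [IsStrictOrderedRing α] {a b : α} (h : a * b ≤ 0) : |b| ≤ |a - b| :=
  sq_le_sq.mp (by nlinarith [sq_nonneg a])

theorem stmt_14_general
    (n : ℕ) (ψ : ℝ → ℝ)
    (hsmooth : ContDiff ℝ (n - 1 : ℕ) ψ)
    (A : ℤ → ℝ)
    (hpoly : ∀ θ : ℤ, ∃ c : ℕ → ℝ, c n = A θ ∧
      ∀ x ∈ Set.Icc ((θ : ℝ) / 2) (((θ : ℝ) + 1) / 2),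
        ψ x = ∑ j ∈ Finset.range (n + 1), c j * x ^ j)
    (η : ℝ → ℝ) (hη : MeasureTheory.Integrable η)
    (hηsupp : ∀ y : ℝ, y ∉ Set.Ioo (-(2 : ℝ) ^ (-5 : ℤ)) ((2 : ℝ) ^ (-5 : ℤ)) → η y = 0)
    (hηmom : ∀ M : ℕ, M ≤ n + 2 → ∫ y : ℝ, y ^ M * η y = 0)
    (hηbig : 0 < ∫ u in (0 : ℝ)..(1 / 2), u ^ n * η u)
    (hparity :
      ((∀ y : ℝ, (-y) ^ n * η (-y) = -(y ^ n * η y)) ∧ A (-1) * A 0 ≤ 0) ∨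
      ((∀ y : ℝ, (-y) ^ n * η (-y) = y ^ n * η y) ∧ 0 ≤ A (-1) * A 0)) :
    ∀ a : ℝ, 1 ≤ a →
      |A 0| * a ^ (-((n : ℤ) + 1)) * (∫ u in (0 : ℝ)..(1 / 2), u ^ n * η u) ≤
        |∫ y : ℝ, η (a * y) * ψ y| := by
  intro a ha
  set m := ∫ u in (0 : ℝ)..(1 / 2), u ^ n * η u
  obtain ⟨c₀, hc₀n, hc₀⟩ := hpoly 0
  obtain ⟨c₁, hc₁n, hc₁⟩ := hpoly (-1)
  have hψ := eqOn_add_pow_indicator_of_contDiff hsmooth (a := -1 / 2) (b := 1 / 2)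
    (by norm_num) (by norm_num) (fun x hx => hc₀ x (by simpa using hx))
    (fun x hx => hc₁ x (by constructor <;> push_cast <;> linarith [hx.1, hx.2]))
  rw [hc₀n, hc₁n] at hψ
  have hint (j : ℕ) : Integrable fun u => u ^ j * η u :=
    hη.continuous_mul_of_forall_notMem_eq_zero isCompact_Icc
      (fun y hy => hηsupp y fun h => hy (Ioo_subset_Icc_self h)) (continuous_pow j)
  have hIoi : ∫ u in Ioi 0, u ^ n * η u = m :=
    integral_Ioi_eq_intervalIntegral (by norm_num) fun u hu => by
      rw [hηsupp u fun h => by norm_num at h; linarith [h.2], mul_zero]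
  have hsmall (y : ℝ) (hy : η (a * y) ≠ 0) : y ∈ Icc (-1 / 2) (1 / 2) := by
    have hay := not_imp_comm.mp (hηsupp (a * y)) hy
    norm_num at hay
    exact ⟨by nlinarith [hay.1], by nlinarith [hay.2]⟩
  have hI : ∫ y, η (a * y) * ψ y = (A (-1) - A 0) * (a ^ (n + 1))⁻¹ * -m := by
    rw [integral_comp_mul_left_mul_eq_of_moments (by linarith) hint
      (fun j hj => hηmom j (by omega)) fun y hy => hψ y (hsmall y hy),
      integral_Iio_eq_neg_integral_Ioi (hint n) (hηmom n (by omega)), hIoi]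
  have hA : |A 0| ≤ |A (-1) - A 0| := by
    rcases hparity with ⟨-, hneg⟩ | ⟨heven, -⟩
    · exact abs_le_abs_sub_of_mul_nonpos hneg
    · linarith [integral_Ioi_eq_zero_of_even (hint n) (hηmom n (by omega)) heven]
  rw [hI, zpow_neg, ← Nat.cast_succ, zpow_natCast, abs_mul, abs_mul, abs_neg, abs_inv, abs_pow,
    abs_of_pos (by linarith : 0 < a), abs_of_pos hηbig]
  gcongr

theorem stmt_14
    (n : ℕ) (hn : 1 ≤ n) (ψ : ℝ → ℝ)
    (hsmooth : ContDiff ℝ (n - 1 : ℕ) ψ)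
    (A : ℤ → ℝ)
    (hpoly : ∀ θ : ℤ, ∃ c : ℕ → ℝ, c n = A θ ∧
      ∀ x ∈ Set.Icc ((θ : ℝ) / 2) (((θ : ℝ) + 1) / 2),
        ψ x = ∑ j ∈ Finset.range (n + 1), c j * x ^ j)
    (hA0 : A 0 ≠ 0)
    (η : ℝ → ℝ) (hη : MeasureTheory.Integrable η)
    (hηsupp : ∀ y : ℝ, y ∉ Set.Ioo (-(2 : ℝ) ^ (-5 : ℤ)) ((2 : ℝ) ^ (-5 : ℤ)) → η y = 0)
    (hηmom : ∀ M : ℕ, M ≤ n + 2 → ∫ y : ℝ, y ^ M * η y = 0)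
    (hηbig : 0 < ∫ u in (0 : ℝ)..(1 / 2), u ^ n * η u)
    (hparity :
      ((∀ y : ℝ, (-y) ^ n * η (-y) = -(y ^ n * η y)) ∧ A (-1) * A 0 ≤ 0) ∨
      ((∀ y : ℝ, (-y) ^ n * η (-y) = y ^ n * η y) ∧ 0 ≤ A (-1) * A 0)) :
    ∀ a : ℝ, 1 ≤ a →
      |A 0| * a ^ (-((n : ℤ) + 1)) * (∫ u in (0 : ℝ)..(1 / 2), u ^ n * η u) ≤
        |∫ y : ℝ, η (a * y) * ψ y| :=
  stmt_14_general n ψ hsmooth A hpoly η hη hηsupp hηmom hηbig hparity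
end

section
/- Fix an integer n ≥ 1. Let ψ : ℝ → ℝ be (n−1)-times continuously differentiable such that for every θ ∈ ℤ the restriction of ψ to [θ/2, (θ+1)/2] coincides with a polynomial of degree at most n, and assume |ψ^{(α)}(x)| ≤ C e^{−γ|x|} for all x ∈ ℝ and all 0 ≤ α ≤ n−1, where C, γ > 0. Let η : ℝ → ℝ be integrable, vanishing outside (−2^{−5}, 2^{−5}), with ∫_ℝ y^M η(y) dy = 0 for 0 ≤ M ≤ n+2, and such that y ↦ y^n η(y) is either odd or even. Then for every real number a ≥ 1 and every λ ∈ ℤ: |∫_ℝ η(a(y − λ/2)) ψ(y) dy| ≤ 8 C e^{γ} a^{−(n+1)} e^{−γ|λ|/2} · |∫_0^{1/2} u^n η(u) du|. -/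
/-!
Around the knot `t = λ/2`, `C^(n-1)`-smoothness forces the two polynomial pieces of `ψ` to agree
to order `n - 1` at `t`, so on `[t - 1/2, t + 1/2]` we have `ψ y = p y + c (y - t)₊ⁿ` with a single
polynomial `p` of degree `≤ n`. After the substitution `u = a (y - t)` the vanishing moments of `η`
annihilate `p`, and the homogeneity of `(·)₊ⁿ` leaves `c a^(-(n+1)) ∫₀^{1/2} uⁿ η(u) du`.
Finally `ψ^(n-1)` is piecewise affine with slope jump `c n!` at `t`, so `c n! / 2` is the second
difference of `ψ^(n-1)` at `t` with step `1/2`, which the decay hypothesis bounds by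
`4 C e^(γ/2) e^(-γ|t|)`.
-/

open MeasureTheory Set Real

namespace Polynomial

theorem iteratedDeriv_eval_s15 {𝕜 : Type*} [NontriviallyNormedField 𝕜] (p : 𝕜[X]) (j : ℕ) :
    iteratedDeriv j (fun x => p.eval x) = fun x => (derivative^[j] p).eval x := by
  induction j with
  | zero => simp
  | succ j ih =>
    ext x
    rw [iteratedDeriv_succ, ih, Function.iterate_succ_apply']
    exact Polynomial.deriv _

theorem contDiff_eval {𝕜 : Type*} [NontriviallyNormedField 𝕜] (p : 𝕜[X]) (k : WithTop ℕ∞) :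
    ContDiff 𝕜 k (fun x => p.eval x) := by
  simpa using p.contDiff_aeval (𝕜 := 𝕜) k

theorem eq_C_leadingCoeff_mul_X_sub_C_pow {R : Type*} [CommRing R] [IsDomain R] [CharZero R]
    {p : R[X]} {t : R} {n : ℕ} (hdeg : p.natDegree ≤ n)
    (hroot : ∀ j < n, (derivative^[j] p).IsRoot t) :
    p = C p.leadingCoeff * (X - C t) ^ n := by
  have hdvd : (X - C t) ^ n ∣ p := by
    rcases eq_or_ne p 0 with rfl | hp
    · exact dvd_zero _
    refine (le_rootMultiplicity_iff hp).1 ?_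
    rcases n with _ | n
    · exact Nat.zero_le _
    · exact lt_rootMultiplicity_of_isRoot_iterate_derivative hp fun j hj => hroot j (by omega)
  exact eq_leadingCoeff_mul_of_monic_of_dvd_of_natDegree_le ((monic_X_sub_C t).pow n) hdvd
    (by rwa [natDegree_pow, natDegree_X_sub_C, mul_one])

theorem eval_add_sub_two_mul_eval_add_eval_sub {R : Type*} [CommRing R] {p : R[X]}
    (hp : p.natDegree ≤ 1) (t h : R) :
    p.eval (t + h) - 2 * p.eval t + p.eval (t - h) = 0 := by
  rw [eq_X_add_C_of_natDegree_le_one hp]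
  simp only [eval_add, eval_mul, eval_C, eval_X]
  ring

theorem eval_iterate_derivative_C_mul_X_sub_C_pow {R : Type*} [CommRing R] (c t x : R) (k : ℕ) :
    (derivative^[k] (C c * (X - C t) ^ (k + 1))).eval x = c * (k + 1).factorial * (x - t) := by
  have hdesc : (k + 1).descFactorial k = (k + 1).factorial := by
    simpa using Nat.factorial_mul_descFactorial (Nat.le_succ k)
  rw [iterate_derivative_C_mul, iterate_derivative_X_sub_pow, Nat.add_sub_cancel_left, hdesc]
  simp [mul_assoc]

end Polynomial

open Polynomial

theorem iteratedDeriv_eq_of_eqOn_Icc {f g : ℝ → ℝ} {A B x : ℝ} {j : ℕ} (hAB : A < B)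
    (hfg : EqOn f g (Icc A B)) (hx : x ∈ Icc A B) (hf : ContDiffAt ℝ j f x)
    (hg : ContDiffAt ℝ j g x) : iteratedDeriv j f x = iteratedDeriv j g x := by
  rw [← iteratedDerivWithin_eq_iteratedDeriv (uniqueDiffOn_Icc hAB) hf hx,
    ← iteratedDerivWithin_eq_iteratedDeriv (uniqueDiffOn_Icc hAB) hg hx,
    iteratedDerivWithin_congr hfg hx]

theorem iteratedDeriv_eq_eval_of_eqOn_Icc {f : ℝ → ℝ} {p : ℝ[X]} {A B x : ℝ} {k j : ℕ}
    (hf : ContDiff ℝ k f) (hj : j ≤ k) (hAB : A < B) (hfp : EqOn f (fun x => p.eval x) (Icc A B))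
    (hx : x ∈ Icc A B) : iteratedDeriv j f x = (derivative^[j] p).eval x := by
  rw [iteratedDeriv_eq_of_eqOn_Icc hAB hfp hx (hf.contDiffAt.of_le (by exact_mod_cast hj))
    (p.contDiff_eval j).contDiffAt, iteratedDeriv_eval_s15]

section Spline

variable {f : ℝ → ℝ} {p q : ℝ[X]} {t h : ℝ} {k : ℕ}

theorem sub_eq_C_mul_X_sub_C_pow_of_contDiff (hf : ContDiff ℝ k f) (hh : 0 < h)
    (hp : EqOn f (fun x => p.eval x) (Icc (t - h) t))
    (hq : EqOn f (fun x => q.eval x) (Icc t (t + h)))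
    (hpdeg : p.natDegree ≤ k + 1) (hqdeg : q.natDegree ≤ k + 1) :
    q - p = C (q - p).leadingCoeff * (X - C t) ^ (k + 1) := by
  refine eq_C_leadingCoeff_mul_X_sub_C_pow
    ((natDegree_sub_le _ _).trans (max_le hqdeg hpdeg)) fun j hj => ?_
  rw [IsRoot, iterate_derivative_sub, eval_sub,
    ← iteratedDeriv_eq_eval_of_eqOn_Icc hf (by omega) (by linarith) hq ⟨le_rfl, by linarith⟩,
    ← iteratedDeriv_eq_eval_of_eqOn_Icc hf (by omega) (by linarith) hp ⟨by linarith, le_rfl⟩,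
    sub_self]

theorem exists_eq_add_mul_max_pow_of_contDiff (hf : ContDiff ℝ k f) (hh : 0 < h)
    (hp : EqOn f (fun x => p.eval x) (Icc (t - h) t))
    (hq : EqOn f (fun x => q.eval x) (Icc t (t + h)))
    (hpdeg : p.natDegree ≤ k + 1) (hqdeg : q.natDegree ≤ k + 1) :
    ∃ c : ℝ, (∀ x ∈ Icc (t - h) (t + h), f x = p.eval x + c * max (x - t) 0 ^ (k + 1)) ∧
      c * (k + 1).factorial * h =
        iteratedDeriv k f (t + h) - 2 * iteratedDeriv k f t + iteratedDeriv k f (t - h) := by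
  set c := (q - p).leadingCoeff
  have hqp := sub_eq_C_mul_X_sub_C_pow_of_contDiff hf hh hp hq hpdeg hqdeg
  have hq' : q = p + C c * (X - C t) ^ (k + 1) := by rw [← hqp]; ring
  refine ⟨c, fun x hx => ?_, ?_⟩
  · rcases le_total x t with hxt | hxt
    · rw [hp ⟨hx.1, hxt⟩, max_eq_right (by linarith), zero_pow k.succ_ne_zero, mul_zero, add_zero]
    · rw [hq ⟨hxt, hx.2⟩, max_eq_left (by linarith), hq']
      simp
  · have hlin : (derivative^[k] p).natDegree ≤ 1 :=
      (natDegree_iterate_derivative p k).trans (by omega)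
    rw [iteratedDeriv_eq_eval_of_eqOn_Icc hf le_rfl (by linarith) hq ⟨by linarith, le_rfl⟩,
      iteratedDeriv_eq_eval_of_eqOn_Icc hf le_rfl (by linarith) hp ⟨by linarith, le_rfl⟩,
      iteratedDeriv_eq_eval_of_eqOn_Icc hf le_rfl (by linarith) hp ⟨le_rfl, by linarith⟩,
      hq', iterate_map_add, eval_add, eval_iterate_derivative_C_mul_X_sub_C_pow]
    linarith [eval_add_sub_two_mul_eval_add_eval_sub hlin t h]

end Spline

section Moments

variable {η : ℝ → ℝ} {h : ℝ}

theorem integrable_mul_of_eq_zero_of_le_abs (hη : Integrable η) (hsupp : ∀ t, h ≤ |t| → η t = 0)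
    {g : ℝ → ℝ} (hg : Continuous g) : Integrable (fun t => g t * η t) := by
  refine (hη.integrableOn.continuousOn_mul hg.continuousOn
    (isCompact_Icc (a := -h) (b := h))).integrable_of_forall_notMem_eq_zero fun t ht => ?_
  rw [hsupp t ?_, mul_zero]
  by_contra! hlt
  exact ht (abs_le.mp hlt.le)

theorem integral_mul_comp_mul_of_homogeneous {a : ℝ} (ha : 0 < a) {g : ℝ → ℝ} {i : ℕ}
    (hg : ∀ u, g (a * u) = a ^ i * g u) :
    ∫ u, g u * η (a * u) = (a ^ (i + 1))⁻¹ * ∫ t, g t * η t := by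
  have hgu : (fun u => g u * η (a * u)) = fun u => (a ^ i)⁻¹ * (g (a * u) * η (a * u)) := by
    ext u
    rw [hg, mul_assoc, inv_mul_cancel_left₀ (pow_ne_zero i ha.ne')]
  rw [hgu, integral_const_mul, Measure.integral_comp_mul_left (fun t => g t * η t) a,
    abs_of_pos (inv_pos.mpr ha), smul_eq_mul, ← mul_assoc, ← mul_inv, pow_succ]

theorem integral_eval_mul_eq_zero (hη : Integrable η) (hsupp : ∀ t, h ≤ |t| → η t = 0) {n : ℕ}
    (hmom : ∀ i ≤ n, ∫ t, t ^ i * η t = 0) {p : ℝ[X]} (hp : p.natDegree ≤ n) :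
    ∫ t, p.eval t * η t = 0 := by
  simp_rw [eval_eq_sum_range' (Nat.lt_succ_of_le hp), Finset.sum_mul, mul_assoc]
  rw [integral_finsetSum _ fun i _ =>
    (integrable_mul_of_eq_zero_of_le_abs hη hsupp (continuous_pow i)).const_mul _]
  refine Finset.sum_eq_zero fun i hi => ?_
  rw [integral_const_mul, hmom i (Nat.lt_succ_iff.mp (Finset.mem_range.mp hi)), mul_zero]

theorem integral_max_pow_mul_eq_intervalIntegral (hsupp : ∀ t, h ≤ |t| → η t = 0) (hh : 0 ≤ h)
    {n : ℕ} (hn : n ≠ 0) :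
    ∫ t, max t 0 ^ n * η t = ∫ t in (0 : ℝ)..h, t ^ n * η t := by
  rw [intervalIntegral.integral_of_le hh, ← integral_indicator measurableSet_Ioc]
  congr 1
  ext t
  by_cases ht : t ∈ Ioc 0 h
  · rw [indicator_of_mem ht, max_eq_left ht.1.le]
  · rw [indicator_of_notMem ht]
    rcases le_or_gt t 0 with ht0 | ht0
    · rw [max_eq_right ht0, zero_pow hn, zero_mul]
    · rw [hsupp t (by rw [abs_of_pos ht0]; exact le_of_lt (not_le.mp fun hth => ht ⟨ht0, hth⟩)),
        mul_zero]

theorem integral_comp_mul_mul_eq_of_eq_add_mul_max_pow (hη : Integrable η)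
    (hsupp : ∀ t, h ≤ |t| → η t = 0) (hh : 0 ≤ h) {n : ℕ} (hn : n ≠ 0)
    (hmom : ∀ i ≤ n, ∫ t, t ^ i * η t = 0) {a : ℝ} (ha : 1 ≤ a) {p : ℝ[X]}
    (hp : p.natDegree ≤ n) {c : ℝ} {φ : ℝ → ℝ}
    (hφ : ∀ u, |u| < h → φ u = p.eval u + c * max u 0 ^ n) :
    ∫ u, η (a * u) * φ u = c * (a ^ (n + 1))⁻¹ * ∫ t in (0 : ℝ)..h, t ^ n * η t := by
  have ha0 : 0 < a := one_pos.trans_le ha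
  have hsuppa : ∀ u, h ≤ |u| → η (a * u) = 0 := fun u hu => hsupp _ <| by
    rw [abs_mul, abs_of_pos ha0]; nlinarith [abs_nonneg u]
  have hηa : Integrable (fun u => η (a * u)) := hη.comp_mul_left' ha0.ne'
  have hsplit : ∀ u, η (a * u) * φ u
      = p.eval u * η (a * u) + c * (max u 0 ^ n * η (a * u)) := fun u => by
    by_cases hu : |u| < h
    · rw [hφ u hu]; ring
    · rw [hsuppa u (not_lt.mp hu)]; ring
  have hmoma : ∀ i ≤ n, ∫ u, u ^ i * η (a * u) = 0 := fun i hi => by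
    rw [integral_mul_comp_mul_of_homogeneous ha0 (g := (· ^ i)) (fun u => mul_pow a u i),
      hmom i hi, mul_zero]
  simp_rw [hsplit]
  rw [integral_add (integrable_mul_of_eq_zero_of_le_abs hηa hsuppa p.continuous)
      ((integrable_mul_of_eq_zero_of_le_abs hηa hsuppa (by fun_prop)).const_mul c),
    integral_eval_mul_eq_zero hηa hsuppa hmoma hp, integral_const_mul,
    integral_mul_comp_mul_of_homogeneous ha0 (g := fun u => max u 0 ^ n) (fun u => by
      rw [← mul_pow, mul_max_of_nonneg _ _ ha0.le, mul_zero]),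
    integral_max_pow_mul_eq_intervalIntegral hsupp hh hn, zero_add, mul_assoc]

end Moments

theorem exists_natDegree_le_eqOn_Icc_half {ψ : ℝ → ℝ} {n : ℕ}
    (hpoly : ∀ θ : ℤ, ∃ c : ℕ → ℝ, ∀ x ∈ Icc ((θ : ℝ) / 2) (((θ : ℝ) + 1) / 2),
      ψ x = ∑ j ∈ Finset.range (n + 1), c j * x ^ j) (θ : ℤ) :
    ∃ p : ℝ[X], p.natDegree ≤ n ∧
      EqOn ψ (fun x => p.eval x) (Icc ((θ : ℝ) / 2) (θ / 2 + 1 / 2)) := by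
  obtain ⟨c, hc⟩ := hpoly θ
  refine ⟨∑ j ∈ Finset.range (n + 1), C (c j) * X ^ j, natDegree_sum_le_of_forall_le _ _
    fun _ hj => (natDegree_C_mul_X_pow_le _ _).trans (Nat.lt_succ_iff.mp (Finset.mem_range.mp hj)),
    fun x hx => ?_⟩
  rw [hc x (by rwa [add_div])]
  simp [eval_finsetSum]

theorem abs_sub_two_mul_add_le_of_decay {g : ℝ → ℝ} {C γ h : ℝ} (hC : 0 ≤ C) (hγ : 0 ≤ γ)
    (hh : 0 ≤ h) (hg : ∀ x, |g x| ≤ C * exp (-γ * |x|)) (t : ℝ) :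
    |g (t + h) - 2 * g t + g (t - h)| ≤ 4 * C * exp (γ * h) * exp (-γ * |t|) := by
  have hnear : ∀ x, |x - t| ≤ h → |g x| ≤ C * exp (γ * h) * exp (-γ * |t|) := fun x hx => by
    refine (hg x).trans ?_
    rw [mul_assoc, ← exp_add]
    gcongr
    nlinarith [abs_sub_abs_le_abs_sub t x, abs_sub_comm x t]
  have h₁ := hnear (t + h) (by simp [abs_of_nonneg hh])
  have h₂ := hnear t (by simpa using hh)
  have h₃ := hnear (t - h) (by simp [abs_of_nonneg hh])
  rw [abs_le] at h₁ h₂ h₃ ⊢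
  constructor <;> linarith

theorem abs_integral_comp_mul_sub_mul_le {f : ℝ → ℝ} {p q : ℝ[X]} {k : ℕ} {t h C γ a : ℝ}
    {η : ℝ → ℝ} (hf : ContDiff ℝ k f) (hh : 0 < h)
    (hp : EqOn f (fun x => p.eval x) (Icc (t - h) t))
    (hq : EqOn f (fun x => q.eval x) (Icc t (t + h)))
    (hpdeg : p.natDegree ≤ k + 1) (hqdeg : q.natDegree ≤ k + 1) (hC : 0 ≤ C) (hγ : 0 ≤ γ)
    (hdecay : ∀ x, |iteratedDeriv k f x| ≤ C * exp (-γ * |x|)) (hη : Integrable η)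
    (hsupp : ∀ y, h ≤ |y| → η y = 0) (hmom : ∀ i ≤ k + 1, ∫ y, y ^ i * η y = 0) (ha : 1 ≤ a) :
    |∫ y, η (a * (y - t)) * f y| * ((k + 1).factorial * h) ≤
      4 * C * exp (γ * h) * exp (-γ * |t|) *
        ((a ^ (k + 2))⁻¹ * |∫ u in (0 : ℝ)..h, u ^ (k + 1) * η u|) := by
  obtain ⟨c, hf_eq, hc⟩ := exists_eq_add_mul_max_pow_of_contDiff hf hh hp hq hpdeg hqdeg
  have hI : ∫ y, η (a * (y - t)) * f y =
      c * (a ^ (k + 2))⁻¹ * ∫ u in (0 : ℝ)..h, u ^ (k + 1) * η u := by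
    have hshift := integral_sub_right_eq_self (μ := volume) (fun u => η (a * u) * f (u + t)) t
    simp only [sub_add_cancel] at hshift
    rw [hshift]
    refine integral_comp_mul_mul_eq_of_eq_add_mul_max_pow hη hsupp hh.le k.succ_ne_zero hmom ha
      (p := taylor t p) (by rwa [natDegree_taylor]) fun u hu => ?_
    rw [taylor_eval]
    simpa using hf_eq (u + t) ⟨by linarith [(abs_lt.mp hu).1], by linarith [(abs_lt.mp hu).2]⟩
  have hjump := abs_sub_two_mul_add_le_of_decay hC hγ hh.le hdecay t
  rw [← hc] at hjump
  rw [hI]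
  set J := ∫ u in (0 : ℝ)..h, u ^ (k + 1) * η u
  calc |c * (a ^ (k + 2))⁻¹ * J| * ((k + 1).factorial * h)
      = |c * (k + 1).factorial * h| * ((a ^ (k + 2))⁻¹ * |J|) := by
        simp only [abs_mul, Nat.abs_cast, abs_of_pos hh,
          abs_of_pos (by positivity : 0 < (a ^ (k + 2))⁻¹)]
        ring
    _ ≤ _ := by gcongr

theorem stmt_15_general
    (n : ℕ) (hn : 1 ≤ n) (ψ : ℝ → ℝ)
    (hsmooth : ContDiff ℝ (n - 1 : ℕ) ψ)
    (hpoly : ∀ θ : ℤ, ∃ c : ℕ → ℝ,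
      ∀ x ∈ Set.Icc ((θ : ℝ) / 2) (((θ : ℝ) + 1) / 2),
        ψ x = ∑ j ∈ Finset.range (n + 1), c j * x ^ j)
    (C γ : ℝ) (hC : 0 < C) (hγ : 0 < γ)
    (hdecay : ∀ α : ℕ, α ≤ n - 1 → ∀ x : ℝ,
      |iteratedDeriv α ψ x| ≤ C * Real.exp (-γ * |x|))
    (η : ℝ → ℝ) (hη : MeasureTheory.Integrable η)
    (hηsupp : ∀ y : ℝ, y ∉ Set.Ioo (-(2 : ℝ) ^ (-5 : ℤ)) ((2 : ℝ) ^ (-5 : ℤ)) → η y = 0)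
    (hηmom : ∀ M : ℕ, M ≤ n + 2 → ∫ y : ℝ, y ^ M * η y = 0) :
    ∀ a : ℝ, 1 ≤ a → ∀ lam : ℤ,
      |∫ y : ℝ, η (a * (y - (lam : ℝ) / 2)) * ψ y| ≤
        8 * C * Real.exp γ * a ^ (-((n : ℤ) + 1)) *
          Real.exp (-γ * |(lam : ℝ)| / 2) *
          |∫ u in (0 : ℝ)..(1 / 2), u ^ n * η u| := by
  intro a ha lam
  obtain ⟨k, rfl⟩ : ∃ k, n = k + 1 := ⟨n - 1, by omega⟩
  rw [Nat.add_sub_cancel] at hsmooth hdecay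
  have hsupp : ∀ y, 1 / 2 ≤ |y| → η y = 0 := fun y hy => hηsupp y fun hmem => by
    have : |y| < 2 ^ (-5 : ℤ) := abs_lt.mpr hmem
    norm_num at this; linarith
  obtain ⟨p, hpdeg, hp⟩ := exists_natDegree_le_eqOn_Icc_half hpoly (lam - 1)
  obtain ⟨q, hqdeg, hq⟩ := exists_natDegree_le_eqOn_Icc_half hpoly lam
  rw [Int.cast_sub, Int.cast_one, sub_div, sub_add_cancel] at hp
  have hbound := abs_integral_comp_mul_sub_mul_le hsmooth one_half_pos hp hq hpdeg hqdeg hC.le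
    hγ.le (hdecay k le_rfl) hη hsupp (fun i hi => hηmom i (by omega)) ha
  have hzpow : a ^ (-(((k + 1 : ℕ) : ℤ) + 1)) = (a ^ (k + 2))⁻¹ := by
    rw [← zpow_natCast, ← zpow_neg]; push_cast; ring_nf
  have hexp : exp (-γ * |(lam : ℝ)| / 2) = exp (-γ * |(lam : ℝ) / 2|) := by
    rw [abs_div, abs_two]; ring_nf
  have hfact : (1 : ℝ) ≤ (k + 1).factorial := by exact_mod_cast (k + 1).factorial_pos
  rw [hzpow, hexp]
  set I := |∫ y, η (a * (y - lam / 2)) * ψ y|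
  set B := (a ^ (k + 2))⁻¹ * |∫ u in (0 : ℝ)..(1 / 2), u ^ (k + 1) * η u|
  have hI : 0 ≤ I := abs_nonneg _
  calc I ≤ 2 * (I * ((k + 1).factorial * (1 / 2))) := by nlinarith
    _ ≤ 2 * (4 * C * exp (γ * (1 / 2)) * exp (-γ * |(lam : ℝ) / 2|) * B) := by gcongr
    _ ≤ 2 * (4 * C * exp γ * exp (-γ * |(lam : ℝ) / 2|) * B) := by gcongr; linarith
    _ = _ := by ring

theorem stmt_15
    (n : ℕ) (hn : 1 ≤ n) (ψ : ℝ → ℝ)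
    (hsmooth : ContDiff ℝ (n - 1 : ℕ) ψ)
    (hpoly : ∀ θ : ℤ, ∃ c : ℕ → ℝ,
      ∀ x ∈ Set.Icc ((θ : ℝ) / 2) (((θ : ℝ) + 1) / 2),
        ψ x = ∑ j ∈ Finset.range (n + 1), c j * x ^ j)
    (C γ : ℝ) (hC : 0 < C) (hγ : 0 < γ)
    (hdecay : ∀ α : ℕ, α ≤ n - 1 → ∀ x : ℝ,
      |iteratedDeriv α ψ x| ≤ C * Real.exp (-γ * |x|))
    (η : ℝ → ℝ) (hη : MeasureTheory.Integrable η)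
    (hηsupp : ∀ y : ℝ, y ∉ Set.Ioo (-(2 : ℝ) ^ (-5 : ℤ)) ((2 : ℝ) ^ (-5 : ℤ)) → η y = 0)
    (hηmom : ∀ M : ℕ, M ≤ n + 2 → ∫ y : ℝ, y ^ M * η y = 0)
    (hparity :
      (∀ y : ℝ, (-y) ^ n * η (-y) = -(y ^ n * η y)) ∨
      (∀ y : ℝ, (-y) ^ n * η (-y) = y ^ n * η y)) :
    ∀ a : ℝ, 1 ≤ a → ∀ lam : ℤ,
      |∫ y : ℝ, η (a * (y - (lam : ℝ) / 2)) * ψ y| ≤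
        8 * C * Real.exp γ * a ^ (-((n : ℤ) + 1)) *
          Real.exp (-γ * |(lam : ℝ)| / 2) *
          |∫ u in (0 : ℝ)..(1 / 2), u ^ n * η u| :=
  stmt_15_general n hn ψ hsmooth hpoly C γ hC hγ hdecay η hη hηsupp hηmom
end
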